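/- Let a, b ∈ ℂ with sin(b) ≠ 0. Then the sequence n ↦ cos(a + b·n) does not converge to 0 as n → ∞. -/

import Mathlib

open Filter Topology

namespace Complex

variable {α : Type*} {l : Filter α} {x : α → ℂ}

theorem tendsto_sin_zero_of_tendsto_cos_zero_of_add {b : ℂ} (hb : sin b ≠ 0)
    (hx : Tendsto (fun i => cos (x i)) l (𝓝 0))
    (hxb : Tendsto (fun i => cos (x i + b)) l (𝓝 0)) :
    Tendsto (fun i => sin (x i)) l (𝓝 0) := by
  have hsin : ∀ i, sin (x i) = (cos (x i) * cos b - cos (x i + b)) / sin b := fun i => by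
    rw [cos_add, eq_div_iff hb]
    ring
  simpa [hsin] using ((hx.mul_const (cos b)).sub hxb).div_const (sin b)

theorem not_tendsto_sin_zero_and_cos_zero [l.NeBot] :
    ¬ (Tendsto (fun i => sin (x i)) l (𝓝 0) ∧ Tendsto (fun i => cos (x i)) l (𝓝 0)) := by
  rintro ⟨hsin, hcos⟩
  have hone : Tendsto (fun i => sin (x i) ^ 2 + cos (x i) ^ 2) l (𝓝 0) := by
    simpa using (hsin.pow 2).add (hcos.pow 2)
  simp only [sin_sq_add_cos_sq] at hone
  exact one_ne_zero (tendsto_nhds_unique tendsto_const_nhds hone)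

end Complex

theorem cos_seq_not_tendsto_zero (a b : ℂ) (hb : Complex.sin b ≠ 0) :
    ¬ Tendsto (fun n : ℕ => Complex.cos (a + b * (n : ℂ))) atTop (nhds 0) := by
  intro h
  have hshift : Tendsto (fun n : ℕ => Complex.cos (a + b * (n : ℂ) + b)) atTop (nhds 0) := by
    convert h.comp (tendsto_add_atTop_nat 1) using 2 with n
    simp only [Function.comp_apply, Nat.cast_add, Nat.cast_one]
    ring_nf
  exact Complex.not_tendsto_sin_zero_and_cos_zero
    ⟨Complex.tendsto_sin_zero_of_tendsto_cos_zero_of_add hb h hshift, h⟩
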